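/- arXiv:1801.07600 — 2 statements merged into one kernel-verified Lean document; each statement's English description precedes it below -/
import Mathlib

section
/- Let λ > 0 and let q be a probability law on the positive integers ℕ* with q(j) > 0 for all j ≥ 1, satisfying i·q(i) ≥ λ·q(i−1) for every i ≥ 2. Then q dominates the positive-conditioned Poisson law Poi⁺_λ, i.e. for every j ≥ 1, Σ_{k≥j} q(k) ≥ Σ_{k≥j} Poi⁺_λ(k). -/
open Real

/-- The positive-conditioned Poisson law on `ℕ* = {1, 2, ...}`:
`Poi⁺_λ(n) = e^{-λ} λ^n / (n! (1 - e^{-λ}))`. -/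
noncomputable def poiPlus (lam : ℝ) (n : ℕ) : ℝ :=
  Real.exp (-lam) * lam ^ n / (n.factorial * (1 - Real.exp (-lam)))

lemma poiPlus_pos (lam : ℝ) (hlam : 0 < lam) (n : ℕ) : 0 < poiPlus lam n := by
  have h1 : Real.exp (-lam) < 1 := Real.exp_lt_one_iff.mpr (by linarith)
  have h2 : (0:ℝ) < n.factorial := by positivity
  have h1' : 0 < 1 - Real.exp (-lam) := by linarith
  unfold poiPlus
  apply div_pos
  · positivity
  · positivity

lemma poiPlus_succ (lam : ℝ) (n : ℕ) :
    poiPlus lam (n + 1) = poiPlus lam n * (lam / (n + 1)) := by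
  unfold poiPlus
  rw [Nat.factorial_succ]
  push_cast
  have hn : ((n:ℝ) + 1) ≠ 0 := by positivity
  have hf : ((n.factorial : ℝ)) ≠ 0 := by positivity
  by_cases he : (1 - Real.exp (-lam)) = 0
  · simp [he]
  · field_simp
    ring

lemma poiPlus_summable (lam : ℝ) : Summable (poiPlus lam) := by
  have : poiPlus lam = fun n =>
      (lam ^ n / n.factorial) * (Real.exp (-lam) / (1 - Real.exp (-lam))) := by
    funext n; unfold poiPlus; field_simp
  rw [this]
  exact (Real.summable_pow_div_factorial lam).mul_right _

lemma poiPlus_tsum (lam : ℝ) :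
    ∑' n : ℕ, poiPlus lam n
      = Real.exp lam * (Real.exp (-lam) / (1 - Real.exp (-lam))) := by
  have h : poiPlus lam = fun n =>
      (lam ^ n / n.factorial) * (Real.exp (-lam) / (1 - Real.exp (-lam))) := by
    funext n; unfold poiPlus; field_simp
  rw [h, tsum_mul_right]
  congr 1
  rw [Real.exp_eq_exp_ℝ, NormedSpace.exp_eq_tsum_div]

lemma poiPlus_tail_sum (lam : ℝ) (hlam : 0 < lam) :
    ∑' k : ℕ, poiPlus lam (k + 1) = 1 := by
  have hs := poiPlus_summable lam
  have h := Summable.sum_add_tsum_nat_add (f := poiPlus lam) 1 hs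
  rw [poiPlus_tsum] at h
  have h0 : ∑ i ∈ Finset.range 1, poiPlus lam i = poiPlus lam 0 := by simp
  have hpe : Real.exp (-lam) ≠ 1 - 0 := by
    have : Real.exp (-lam) < 1 := Real.exp_lt_one_iff.mpr (by linarith)
    intro hh; rw [hh] at this; linarith
  have hne : (1 - Real.exp (-lam)) ≠ 0 := by
    intro hh; apply hpe; linarith [hh]
  rw [h0] at h
  have hp0 : poiPlus lam 0 = Real.exp (-lam) / (1 - Real.exp (-lam)) := by
    unfold poiPlus; simp
  rw [hp0] at h
  have hexp : Real.exp lam * Real.exp (-lam) = 1 := by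
    rw [← Real.exp_add]; simp
  field_simp at h
  have hz : ((∑' (i : ℕ), poiPlus lam (i + 1)) - 1) * (1 - Real.exp (-lam)) = 0 := by
    linarith [h, hexp]
  rcases mul_eq_zero.mp hz with h1 | h2
  · linarith
  · exact absurd h2 hne

/-- If a positive probability law `q` on `ℕ*` satisfies
`i * q i ≥ λ * q (i-1)` for all `i ≥ 2`, then `q` dominates the
positive-conditioned Poisson law `Poi⁺_λ`. -/
theorem statement_4
    (lam : ℝ) (hlam : 0 < lam)
    (q : ℕ → ℝ)
    (hq_pos : ∀ j, 1 ≤ j → 0 < q j)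
    (hq_le_one : ∀ j, 1 ≤ j → q j ≤ 1)
    (hq_summable : Summable fun j : ℕ => q (j + 1))
    (hq_sum : ∑' j : ℕ, q (j + 1) = 1)
    (h : ∀ i : ℕ, 2 ≤ i → (i : ℝ) * q i ≥ lam * q (i - 1)) :
    ∀ j, 1 ≤ j → ∑' k : ℕ, q (j + k) ≥ ∑' k : ℕ, poiPlus lam (j + k) := by
  set p := poiPlus lam with hp
  have hp_pos : ∀ n, 0 < p n := poiPlus_pos lam hlam
  -- cross-multiplication inequality
  have cross : ∀ a b : ℕ, 1 ≤ a → a ≤ b → q a * p b ≤ q b * p a := by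
    intro a b ha hab
    induction b, hab using Nat.le_induction with
    | base => exact le_refl _
    | succ b hb ih =>
      have hb1 : 1 ≤ b := le_trans ha hb
      have hrec : p (b + 1) = p b * (lam / (b + 1)) := poiPlus_succ lam b
      have hq_step : q (b + 1) ≥ lam / (b + 1) * q b := by
        have h2 : 2 ≤ b + 1 := by omega
        have := h (b + 1) h2
        have hsub : (b + 1) - 1 = b := by omega
        rw [hsub] at this
        have hbpos : (0:ℝ) < (b:ℝ) + 1 := by positivity
        rw [ge_iff_le, div_mul_eq_mul_div, div_le_iff₀ hbpos]
        push_cast at this ⊢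
        nlinarith
      have hc : (0:ℝ) ≤ lam / (b + 1) := by positivity
      calc q a * p (b + 1) = (q a * p b) * (lam / (b + 1)) := by rw [hrec]; ring
        _ ≤ (q b * p a) * (lam / (b + 1)) := by
            apply mul_le_mul_of_nonneg_right ih hc
        _ = (lam / (b + 1) * q b) * p a := by ring
        _ ≤ q (b + 1) * p a := by
            apply mul_le_mul_of_nonneg_right hq_step (le_of_lt (hp_pos a))
  intro j hj
  obtain ⟨m, rfl⟩ : ∃ m, j = m + 1 := ⟨j - 1, by omega⟩
  -- summability of tails
  have hq_tail_summable : Summable (fun k : ℕ => q (m + 1 + k)) := by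
    have := (summable_nat_add_iff m).mpr hq_summable
    refine this.congr fun k => ?_
    congr 1; omega
  have hp_tail_summable : Summable (fun k : ℕ => p (m + 1 + k)) := by
    have := (summable_nat_add_iff (m + 1)).mpr (poiPlus_summable lam)
    refine this.congr fun k => ?_
    congr 1; omega
  by_cases hcase : p (m + 1) ≤ q (m + 1)
  · -- termwise domination of tails
    apply Summable.tsum_le_tsum _ hp_tail_summable hq_tail_summable
    intro k
    have hc := cross (m + 1) (m + 1 + k) (by omega) (by omega)
    have hpj := hp_pos (m + 1)
    have hpk := hp_pos (m + 1 + k)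
    nlinarith
  · push_neg at hcase
    -- heads compare termwise, use total sums
    have head_le : ∑ i ∈ Finset.range m, q (i + 1) ≤ ∑ i ∈ Finset.range m, p (i + 1) := by
      apply Finset.sum_le_sum
      intro i hi
      have him : i + 1 ≤ m + 1 := by
        simp only [Finset.mem_range] at hi; omega
      have hc := cross (i + 1) (m + 1) (by omega) him
      have hpj := hp_pos (m + 1)
      have hpi := hp_pos (i + 1)
      nlinarith
    have hq_tail : ∑' k : ℕ, q (m + 1 + k) = 1 - ∑ i ∈ Finset.range m, q (i + 1) := by
      have := Summable.sum_add_tsum_nat_add (f := fun i => q (i + 1)) m hq_summable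
      rw [hq_sum] at this
      have : ∑' k : ℕ, q (k + m + 1) = 1 - ∑ i ∈ Finset.range m, q (i + 1) := by
        linarith [this]
      rw [← this]
      apply tsum_congr; intro k; congr 1; omega
    have hp_tail : ∑' k : ℕ, p (m + 1 + k) = 1 - ∑ i ∈ Finset.range m, p (i + 1) := by
      have hps : Summable (fun i : ℕ => p (i + 1)) :=
        (summable_nat_add_iff 1).mpr (poiPlus_summable lam)
      have := Summable.sum_add_tsum_nat_add (f := fun i => p (i + 1)) m hps
      rw [poiPlus_tail_sum lam hlam] at this
      have : ∑' k : ℕ, p (k + m + 1) = 1 - ∑ i ∈ Finset.range m, p (i + 1) := by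
        linarith [this]
      rw [← this]
      apply tsum_congr; intro k; congr 1; omega
    rw [hq_tail, hp_tail]
    linarith
end

section
/- For every α > 1 there exists a constant k > 0 such that the Cauchy-type density f_α satisfies (f_α * f_α)(x) ≥ k · f_α(x) for every x ∈ ℝ. -/
/-!
For `|y| ≤ 1` we have `f_α(y) ≥ f_α(1)`, and since `|x - y| ≤ 1 + |x|`, the doubling bound
`1 + (1 + |x|)^α ≤ (1 + 2^α)(1 + |x|^α)` gives `f_α(x - y) ≥ f_α(x) / (1 + 2^α)`. Integrating the
convolution integrand only over `[0, 1]` therefore yields the constant `k = f_α(1) / (1 + 2^α)`.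
-/

open Real MeasureTheory

/-- The Cauchy-type probability density `f_α(y) = r_α / (1 + |y|^α)` on `ℝ`, where
`r_α = (∫ dy/(1+|y|^α))⁻¹` is the normalizing constant. -/
noncomputable def cauchyType (α : ℝ) (y : ℝ) : ℝ :=
  (∫ z : ℝ, (1 + |z| ^ α)⁻¹)⁻¹ * (1 + |y| ^ α)⁻¹

lemma Real.add_rpow_le_two_rpow_mul_rpow_add_rpow {a b p : ℝ} (ha : 0 ≤ a) (hb : 0 ≤ b)
    (hp : 0 ≤ p) : (a + b) ^ p ≤ 2 ^ p * (a ^ p + b ^ p) := calc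
  (a + b) ^ p ≤ (2 * max a b) ^ p := by
    rw [two_mul]; gcongr <;> simp
  _ = 2 ^ p * max a b ^ p := Real.mul_rpow zero_le_two (le_max_of_le_left ha)
  _ = 2 ^ p * max (a ^ p) (b ^ p) := by rw [Real.rpow_max ha hb hp]
  _ ≤ 2 ^ p * (a ^ p + b ^ p) := by
    gcongr; exact max_le_add_of_nonneg (by positivity) (by positivity)

lemma integrable_inv_one_add_abs_rpow {α : ℝ} (hα : 1 < α) :
    Integrable fun y : ℝ => (1 + |y| ^ α)⁻¹ := by
  refine ((integrable_one_add_norm (E := ℝ) (r := α) (by simpa using hα)).const_mul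
    (2 ^ α)).mono' (by fun_prop : Measurable _).aestronglyMeasurable
    (Filter.Eventually.of_forall fun y => ?_)
  have hdouble : (1 + |y|) ^ α ≤ 2 ^ α * (1 + |y| ^ α) := by
    simpa using Real.add_rpow_le_two_rpow_mul_rpow_add_rpow zero_le_one (abs_nonneg y)
      (by linarith : 0 ≤ α)
  rw [Real.norm_eq_abs, abs_inv, abs_of_pos (by positivity), Real.norm_eq_abs,
    Real.rpow_neg (by positivity), ← div_eq_mul_inv,
    inv_le_comm₀ (by positivity) (by positivity), inv_div, div_le_iff₀ (by positivity), mul_comm]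
  exact hdouble

section cauchyType

variable {α : ℝ}

lemma cauchyType_nonneg (α y : ℝ) : 0 ≤ cauchyType α y := by
  unfold cauchyType
  positivity

lemma cauchyType_pos (hα : 1 < α) (y : ℝ) : 0 < cauchyType α y := by
  have hnormalizer : 0 < ∫ z : ℝ, (1 + |z| ^ α)⁻¹ :=
    (integral_pos_iff_support_of_nonneg (fun z => by positivity)
      (integrable_inv_one_add_abs_rpow hα)).2
      (by simp [Function.support, fun z : ℝ => (by positivity : (0 : ℝ) < 1 + |z| ^ α).ne'])
  unfold cauchyType
  positivity

lemma integrable_cauchyType (hα : 1 < α) : Integrable (cauchyType α) :=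
  (integrable_inv_one_add_abs_rpow hα).const_mul _

lemma cauchyType_le_of_abs_le (hα : 0 ≤ α) {y z : ℝ} (h : |y| ≤ |z|) :
    cauchyType α z ≤ cauchyType α y := by
  unfold cauchyType
  gcongr

lemma cauchyType_le_mul_cauchyType_one_add_abs (hα : 0 ≤ α) (x : ℝ) :
    cauchyType α x ≤ (1 + 2 ^ α) * cauchyType α (1 + |x|) := by
  have hdouble : (1 + |x|) ^ α ≤ 2 ^ α * (1 + |x| ^ α) := by
    simpa using Real.add_rpow_le_two_rpow_mul_rpow_add_rpow zero_le_one (abs_nonneg x) hα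
  have hden : 1 + |(1 + |x|)| ^ α ≤ (1 + 2 ^ α) * (1 + |x| ^ α) := by
    rw [abs_of_nonneg (by positivity)]
    nlinarith [Real.rpow_nonneg (abs_nonneg x) α]
  unfold cauchyType
  rw [mul_left_comm, ← div_eq_mul_inv (1 + 2 ^ α)]
  gcongr _ * ?_
  rw [le_div_iff₀ (by positivity), inv_mul_le_iff₀ (by positivity), mul_comm]
  exact hden

lemma le_cauchyType_mul_cauchyType_sub (hα : 0 ≤ α) {x y : ℝ} (hy : |y| ≤ 1) :
    cauchyType α 1 / (1 + 2 ^ α) * cauchyType α x ≤ cauchyType α y * cauchyType α (x - y) := by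
  have hfy : cauchyType α 1 ≤ cauchyType α y := cauchyType_le_of_abs_le hα (by simpa using hy)
  have hfxy : cauchyType α x / (1 + 2 ^ α) ≤ cauchyType α (x - y) := by
    rw [div_le_iff₀' (by positivity)]
    refine (cauchyType_le_mul_cauchyType_one_add_abs hα x).trans ?_
    gcongr
    refine cauchyType_le_of_abs_le hα ?_
    rw [abs_of_nonneg (by positivity : (0 : ℝ) ≤ 1 + |x|)]
    linarith [abs_sub x y]
  rw [div_mul_eq_mul_div, mul_div_assoc]
  exact mul_le_mul hfy hfxy (by have := cauchyType_nonneg α x; positivity) (cauchyType_nonneg α y)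

lemma integrable_cauchyType_mul_cauchyType_sub (hα : 1 < α) (x : ℝ) :
    Integrable fun y => cauchyType α y * cauchyType α (x - y) :=
  (integrable_cauchyType hα).mul_bdd
    ((integrable_cauchyType hα).comp_sub_left x).aestronglyMeasurable <|
    Filter.Eventually.of_forall fun y => by
      rw [Real.norm_eq_abs, abs_of_nonneg (cauchyType_nonneg α _)]
      exact cauchyType_le_of_abs_le (y := 0) (by linarith) (by simp)

end cauchyType

/-- For every `α > 1` there is a constant `k > 0` with
`(f_α * f_α)(x) ≥ k · f_α(x)` for all `x ∈ ℝ`. -/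
theorem statement_11 (α : ℝ) (hα : 1 < α) :
    ∃ k : ℝ, 0 < k ∧ ∀ x : ℝ,
      k * cauchyType α x ≤ ∫ y : ℝ, cauchyType α y * cauchyType α (x - y) := by
  refine ⟨cauchyType α 1 / (1 + 2 ^ α), div_pos (cauchyType_pos hα 1) (by positivity),
    fun x => ?_⟩
  have hint := integrable_cauchyType_mul_cauchyType_sub hα x
  have hbound : ∀ y ∈ Set.Icc (0 : ℝ) 1,
      cauchyType α 1 / (1 + 2 ^ α) * cauchyType α x ≤ cauchyType α y * cauchyType α (x - y) :=
    fun y hy => le_cauchyType_mul_cauchyType_sub (by linarith) (abs_le.2 ⟨by linarith [hy.1], hy.2⟩)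
  calc cauchyType α 1 / (1 + 2 ^ α) * cauchyType α x
      = cauchyType α 1 / (1 + 2 ^ α) * cauchyType α x * volume.real (Set.Icc (0 : ℝ) 1) := by
        simp
    _ ≤ ∫ y in Set.Icc (0 : ℝ) 1, cauchyType α y * cauchyType α (x - y) :=
        setIntegral_ge_of_const_le_real measurableSet_Icc (by simp) hbound hint.integrableOn
    _ ≤ ∫ y, cauchyType α y * cauchyType α (x - y) :=
        setIntegral_le_integral hint <| Filter.Eventually.of_forall fun y =>
          mul_nonneg (cauchyType_nonneg α y) (cauchyType_nonneg α _)
end
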